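/- arXiv:1703.05149 — 8 statements merged into one kernel-verified Lean document; each statement's English description precedes it below -/
import Mathlib

section
/- If G_1 and G_2 are graphs on n vertices with maximum degrees Δ_1 and Δ_2 respectively, and 2·Δ_1·Δ_2 < n, then G_1 and G_2 pack. -/
def Pack {n : ℕ} (G1 G2 : SimpleGraph (Fin n)) : Prop :=
  ∃ f g : Fin n ↪ Fin n,
    Disjoint (Sym2.map ⇑f '' G1.edgeSet) (Sym2.map ⇑g '' G2.edgeSet)

/-- The set of edges of `G1` that are mapped by `σ` onto edges of `G2`. -/
def conflicts {n : ℕ} (G1 G2 : SimpleGraph (Fin n))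
    [DecidableRel G1.Adj] [DecidableRel G2.Adj] (σ : Equiv.Perm (Fin n)) :
    Finset (Sym2 (Fin n)) :=
  G1.edgeFinset.filter (fun e => Sym2.map ⇑σ e ∈ G2.edgeFinset)

lemma mem_conflicts {n : ℕ} {G1 G2 : SimpleGraph (Fin n)}
    [DecidableRel G1.Adj] [DecidableRel G2.Adj] {σ : Equiv.Perm (Fin n)}
    {a b : Fin n} :
    s(a, b) ∈ conflicts G1 G2 σ ↔ G1.Adj a b ∧ G2.Adj (σ a) (σ b) := by
  simp [conflicts, SimpleGraph.mem_edgeFinset]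

/-- Sauer–Spencer: if `2Δ₁Δ₂ < n` then `G1` and `G2` pack. -/
theorem stmt_2 {n : ℕ} (G1 G2 : SimpleGraph (Fin n))
    [DecidableRel G1.Adj] [DecidableRel G2.Adj]
    (h : 2 * G1.maxDegree * G2.maxDegree < n) : Pack G1 G2 := by
  classical
  set Δ1 := G1.maxDegree with hΔ1
  set Δ2 := G2.maxDegree with hΔ2
  -- choose a permutation minimizing the number of conflicts
  obtain ⟨σ, -, hmin⟩ := Finset.exists_min_image (Finset.univ : Finset (Equiv.Perm (Fin n)))
    (fun σ => (conflicts G1 G2 σ).card) ⟨1, Finset.mem_univ 1⟩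
  -- claim: σ has no conflicts
  have hempty : conflicts G1 G2 σ = ∅ := by
    by_contra hne
    obtain ⟨e, he⟩ := Finset.nonempty_of_ne_empty hne
    induction e with
    | _ u v =>
    rw [mem_conflicts] at he
    obtain ⟨huv1, huv2⟩ := he
    -- the "bad" sets
    set A : Finset (Fin n) :=
      Finset.univ.filter (fun w => ∃ x, G1.Adj u x ∧ G2.Adj (σ x) (σ w)) with hA
    set B : Finset (Fin n) :=
      Finset.univ.filter (fun w => ∃ x, G1.Adj w x ∧ G2.Adj (σ u) (σ x)) with hB
    have hAcard : A.card ≤ Δ1 * Δ2 := by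
      have hsub : A ⊆ (G1.neighborFinset u).biUnion
          (fun x => (G2.neighborFinset (σ x)).image ⇑σ.symm) := by
        intro w hw
        rw [hA, Finset.mem_filter] at hw
        obtain ⟨-, x, hx1, hx2⟩ := hw
        rw [Finset.mem_biUnion]
        refine ⟨x, by simpa using hx1, ?_⟩
        rw [Finset.mem_image]
        exact ⟨σ w, by simpa using hx2, σ.symm_apply_apply w⟩
      calc A.card ≤ _ := Finset.card_le_card hsub
        _ ≤ ∑ x ∈ G1.neighborFinset u, ((G2.neighborFinset (σ x)).image ⇑σ.symm).card :=
          Finset.card_biUnion_le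
        _ ≤ ∑ _x ∈ G1.neighborFinset u, Δ2 := by
          refine Finset.sum_le_sum fun x _ => ?_
          exact le_trans (Finset.card_image_le) (by
            rw [SimpleGraph.card_neighborFinset_eq_degree]
            exact G2.degree_le_maxDegree _)
        _ = (G1.neighborFinset u).card * Δ2 := by rw [Finset.sum_const, smul_eq_mul]
        _ ≤ Δ1 * Δ2 := by
          have := G1.degree_le_maxDegree u
          rw [SimpleGraph.card_neighborFinset_eq_degree]
          exact Nat.mul_le_mul_right _ this
    have hBcard : B.card ≤ Δ2 * Δ1 := by
      have hsub : B ⊆ ((G2.neighborFinset (σ u)).image ⇑σ.symm).biUnion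
          (fun x => G1.neighborFinset x) := by
        intro w hw
        rw [hB, Finset.mem_filter] at hw
        obtain ⟨-, x, hx1, hx2⟩ := hw
        rw [Finset.mem_biUnion]
        refine ⟨x, ?_, by simpa using hx1.symm⟩
        rw [Finset.mem_image]
        exact ⟨σ x, by simpa using hx2, σ.symm_apply_apply x⟩
      calc B.card ≤ _ := Finset.card_le_card hsub
        _ ≤ ∑ x ∈ (G2.neighborFinset (σ u)).image ⇑σ.symm, (G1.neighborFinset x).card :=
          Finset.card_biUnion_le
        _ ≤ ∑ _x ∈ (G2.neighborFinset (σ u)).image ⇑σ.symm, Δ1 := by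
          refine Finset.sum_le_sum fun x _ => ?_
          rw [SimpleGraph.card_neighborFinset_eq_degree]
          exact G1.degree_le_maxDegree _
        _ = ((G2.neighborFinset (σ u)).image ⇑σ.symm).card * Δ1 := by
          rw [Finset.sum_const, smul_eq_mul]
        _ ≤ Δ2 * Δ1 := by
          refine Nat.mul_le_mul_right _ ?_
          refine le_trans (Finset.card_image_le) ?_
          rw [SimpleGraph.card_neighborFinset_eq_degree]
          exact G2.degree_le_maxDegree _
    have huA : u ∈ A := by
      rw [hA, Finset.mem_filter]
      exact ⟨Finset.mem_univ _, v, huv1, huv2.symm⟩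
    have huB : u ∈ B := by
      rw [hB, Finset.mem_filter]
      exact ⟨Finset.mem_univ _, v, huv1, huv2⟩
    -- find a good w outside A ∪ B ∪ {v}
    have hcard : (A ∪ B ∪ {v}).card < n := by
      have h1 : (A ∪ B).card + 1 ≤ A.card + B.card := by
        have := Finset.card_union_add_card_inter A B
        have hin : 1 ≤ (A ∩ B).card :=
          Finset.card_pos.mpr ⟨u, Finset.mem_inter.mpr ⟨huA, huB⟩⟩
        omega
      have h2 : (A ∪ B ∪ {v}).card ≤ (A ∪ B).card + 1 :=
        le_trans (Finset.card_union_le _ _) (by simp)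
      have hswap : Δ2 * Δ1 = Δ1 * Δ2 := Nat.mul_comm _ _
      have hP : Δ1 * Δ2 + Δ1 * Δ2 < n := by
        have : 2 * Δ1 * Δ2 = Δ1 * Δ2 + Δ1 * Δ2 := by ring
        omega
      omega
    obtain ⟨w, hwgood⟩ : ∃ w, w ∉ A ∪ B ∪ {v} := by
      by_contra hall
      push_neg at hall
      have : (Finset.univ : Finset (Fin n)) ⊆ A ∪ B ∪ {v} := fun w _ => hall w
      have := Finset.card_le_card this
      simp only [Finset.card_univ, Fintype.card_fin] at this
      omega
    simp only [Finset.mem_union, Finset.mem_singleton, not_or] at hwgood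
    obtain ⟨⟨hwA, hwB⟩, hwv⟩ := hwgood
    rw [hA, Finset.mem_filter, not_and] at hwA
    have hwA' : ∀ x, G1.Adj u x → ¬ G2.Adj (σ x) (σ w) := by
      intro x hx hadj
      exact hwA (Finset.mem_univ w) ⟨x, hx, hadj⟩
    rw [hB, Finset.mem_filter, not_and] at hwB
    have hwB' : ∀ x, G1.Adj w x → ¬ G2.Adj (σ u) (σ x) := by
      intro x hx hadj
      exact hwB (Finset.mem_univ w) ⟨x, hx, hadj⟩
    -- the swapped permutation
    set τ : Equiv.Perm (Fin n) := (Equiv.swap u w).trans σ with hτ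
    have hτu : τ u = σ w := by simp [hτ]
    have hτw : τ w = σ u := by simp [hτ]
    have hτo : ∀ x, x ≠ u → x ≠ w → τ x = σ x := by
      intro x hxu hxw
      simp [hτ, Equiv.swap_apply_of_ne_of_ne hxu hxw]
    -- key: every conflict of τ is a conflict of σ
    have hkey : ∀ a b, G1.Adj a b → G2.Adj (τ a) (τ b) → G2.Adj (σ a) (σ b) := by
      intro a b hab hadj
      by_cases hau : a = u
      · by_cases hbw : b = w
        · subst hau; subst hbw
          rw [hτu, hτw] at hadj
          exact hadj.symm
        · by_cases hbu : b = u
          · subst hau; subst hbu; exact absurd hab (G1.irrefl)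
          · subst hau
            rw [hτu, hτo b hbu hbw] at hadj
            exact absurd hadj.symm (hwA' b hab)
      · by_cases haw : a = w
        · by_cases hbu : b = u
          · subst haw; subst hbu
            rw [hτw, hτu] at hadj
            exact hadj.symm
          · by_cases hbw : b = w
            · subst haw; subst hbw; exact absurd hab (G1.irrefl)
            · subst haw
              rw [hτw, hτo b hbu hbw] at hadj
              exact absurd hadj (hwB' b hab)
        · rw [hτo a hau haw] at hadj
          by_cases hbu : b = u
          · subst hbu
            rw [hτu] at hadj
            exact absurd hadj (hwA' a hab.symm)
          · by_cases hbw : b = w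
            · subst hbw
              rw [hτw] at hadj
              exact absurd hadj.symm (hwB' a hab.symm)
            · rw [hτo b hbu hbw] at hadj
              exact hadj
    have hsub : conflicts G1 G2 τ ⊆ conflicts G1 G2 σ := by
      intro e he
      induction e with
      | _ a b =>
        rw [mem_conflicts] at he ⊢
        exact ⟨he.1, hkey a b he.1 he.2⟩
    have hnotin : s(u, v) ∉ conflicts G1 G2 τ := by
      rw [mem_conflicts]
      rintro ⟨-, hadj⟩
      have hvu : v ≠ u := fun hh => G1.irrefl (hh ▸ huv1)
      rw [hτu, hτo v hvu (Ne.symm hwv)] at hadj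
      exact hwA' v huv1 hadj.symm
    have hin : s(u, v) ∈ conflicts G1 G2 σ := mem_conflicts.mpr ⟨huv1, huv2⟩
    have hss : conflicts G1 G2 τ ⊂ conflicts G1 G2 σ :=
      ⟨hsub, fun hc => hnotin (hc hin)⟩
    have := Finset.card_lt_card hss
    have := hmin τ (Finset.mem_univ τ)
    omega
  -- conclude packing
  refine ⟨σ.toEmbedding, Function.Embedding.refl _, ?_⟩
  rw [Set.disjoint_left]
  rintro e ⟨e1, he1, rfl⟩ ⟨e2, he2, heq⟩
  rw [show (⇑(Function.Embedding.refl (Fin n))) = id from rfl, Sym2.map_id, id_eq] at heq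
  have : e1 ∈ conflicts G1 G2 σ := by
    rw [conflicts, Finset.mem_filter, SimpleGraph.mem_edgeFinset, SimpleGraph.mem_edgeFinset]
    subst heq
    exact ⟨he1, he2⟩
  rw [hempty] at this
  exact absurd this (Finset.notMem_empty _)
end

section
/- Suppose G_1 and G_2 are labelled graphs on vertex set [n] = {1,...,n}, and let u_0, ..., u_{ℓ-1} ∈ [n]. Assume that for all k, k' ∈ {0,...,ℓ-1}: (i) there is no vertex i' with u_k i' ∈ E(G_2) and i' u_{k+1 mod ℓ} ∈ E(G_1) (no red–blue-link from u_k to u_{k+1 mod ℓ}), and (ii) if u_k u_{k'} ∈ E(G_2), then u_{k+1 mod ℓ} u_{k'+1 mod ℓ} ∉ E(G_1). Then after relabelling G_2 by the cyclic permutation sending the label of u_k to u_{k+1 mod ℓ} for each k, no edge incident to any of u_0, ..., u_{ℓ-1} is both an edge of G_1 and of the relabelled G_2. -/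
/-- The swap lemma: after a `(u₀,…,u_{ℓ-1})`-swap of the labels of `G2`,
no purple edge is incident to any of `u₀,…,u_{ℓ-1}`. -/
theorem stmt_3 {n ℓ : ℕ} [NeZero ℓ] (G1 G2 : SimpleGraph (Fin n))
    (u : Fin ℓ → Fin n) (hu : Function.Injective u)
    (σ : Equiv.Perm (Fin n))
    (hσ : ∀ k : Fin ℓ, σ (u k) = u (k + 1))
    (hfix : ∀ x : Fin n, (∀ k : Fin ℓ, x ≠ u k) → σ x = x)
    (h1 : ∀ k : Fin ℓ, ¬∃ i', G2.Adj (u k) i' ∧ G1.Adj i' (u (k + 1)))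
    (h2 : ∀ k k' : Fin ℓ, G2.Adj (u k) (u k') → ¬ G1.Adj (u (k + 1)) (u (k' + 1))) :
    ∀ (k : Fin ℓ) (w : Fin n),
      ¬(G1.Adj (u k) w ∧ G2.Adj (σ.symm (u k)) (σ.symm w)) := by
  have hsymm : ∀ k : Fin ℓ, σ.symm (u k) = u (k - 1) := by
    intro k
    have := hσ (k - 1)
    rw [sub_add_cancel] at this
    rw [← this, Equiv.symm_apply_apply]
  rintro k w ⟨hA, hB⟩
  by_cases hw : ∃ k' : Fin ℓ, w = u k'
  · obtain ⟨k', rfl⟩ := hw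
    rw [hsymm, hsymm] at hB
    exact h2 (k - 1) (k' - 1) hB (by simpa [sub_add_cancel] using hA)
  · push_neg at hw
    have hfw : σ.symm w = w := by
      rw [Equiv.symm_apply_eq]
      exact (hfix w hw).symm
    rw [hsymm, hfw] at hB
    exact h1 (k - 1) ⟨w, hB, by simpa [sub_add_cancel] using hA.symm⟩
end

section
/- If G_1 and G_2 are graphs on n vertices with (Δ(G_1)+1)(Δ(G_2)+1) ≤ n+1, then any pair of bijective labellings of G_1 and G_2 into [n] that minimizes the number of purple edges has the property that the graph induced by the purple edges has maximum degree at most 1. -/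
/-
If a vertex `i` has purple degree at least 2, swap the labels of `i` and some vertex `v` in the
second graph. This changes the purple count by
`2 (|N₁(i) ∩ N₂(v)| + |N₁(v) ∩ N₂(i)| - |N₁(i) ∩ N₂(i)| - |N₁(v) ∩ N₂(v)|)`, provided `iv`
is not purple. By double counting, at most `Δ₁Δ₂` vertices `v` have
`|N₁(i) ∩ N₂(v)| + |N₁(v) ∩ N₂(i)| ≥ 2`, and `i` has at most `Δ₁` purple neighbours, so when
`(Δ₁ + 1)(Δ₂ + 1) ≤ n + 1` some `v` avoids both; swapping with it strictly decreases the purple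
count, contradicting minimality.
-/

open Finset

/-- The number of (ordered) purple pairs induced by a pair of labellings
`τ1, τ2` of `G1` and `G2`. -/
def pcount2 {n : ℕ} (G1 G2 : SimpleGraph (Fin n))
    [DecidableRel G1.Adj] [DecidableRel G2.Adj] (τ1 τ2 : Equiv.Perm (Fin n)) : ℕ :=
  (Finset.univ.filter fun p : Fin n × Fin n =>
    G1.Adj (τ1.symm p.1) (τ1.symm p.2) ∧ G2.Adj (τ2.symm p.1) (τ2.symm p.2)).card

theorem Finset.sum_sum_eq_two_nsmul_of_symm {ι M : Type*} [Fintype ι] [AddCommMonoid M]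
    (d : ι → ι → M) (s : Finset ι) (hsymm : ∀ a b, d a b = d b a)
    (hout : ∀ a ∉ s, ∀ b ∉ s, d a b = 0) (hin : ∀ a ∈ s, ∀ b ∈ s, d a b = 0) :
    ∑ a, ∑ b, d a b = 2 • ∑ a ∈ s, ∑ b, d a b := by
  classical
  set f : ι → ι → M := fun a b => if a ∈ s then d a b else 0
  have hsplit : ∀ a b, d a b = f a b + f b a := by
    intro a b
    by_cases ha : a ∈ s <;> by_cases hb : b ∈ s <;> simp [f, ha, hb, hin, hout, hsymm b a]
  calc ∑ a, ∑ b, d a b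
      = ∑ a, ∑ b, f a b + ∑ a, ∑ b, f b a := by simp only [hsplit, sum_add_distrib]
    _ = 2 • ∑ a, ∑ b, f a b := by rw [sum_comm (f := fun a b => f b a), two_nsmul]
    _ = 2 • ∑ a ∈ s, ∑ b, d a b := by
        simp only [f, sum_ite_irrel, sum_const_zero, sum_ite_mem, univ_inter]

namespace SimpleGraph

variable {V W : Type*} [Fintype V]

theorem degree_comap_equiv [Fintype W] (G : SimpleGraph W) [DecidableRel G.Adj] (σ : V ≃ W)
    (a : V) : (G.comap σ).degree a = G.degree (σ a) := by
  rw [← card_neighborSet_eq_degree, ← card_neighborSet_eq_degree]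
  exact Fintype.card_congr (σ.subtypeEquiv fun _ => Iff.rfl)

variable (H1 H2 : SimpleGraph V) [DecidableRel H1.Adj] [DecidableRel H2.Adj]

/-- `crossDegree H1 H2 a a` is the degree of `a` in the purple graph `H1 ⊓ H2`. -/
def crossDegree (a b : V) : ℕ := #{x | H1.Adj a x ∧ H2.Adj b x}

def purpleCount : ℕ := #{p : V × V | H1.Adj p.1 p.2 ∧ H2.Adj p.1 p.2}

theorem crossDegree_comm (a b : V) : crossDegree H1 H2 a b = crossDegree H2 H1 b a := by
  simp only [crossDegree, and_comm]

theorem crossDegree_le_degree_left (a b : V) : crossDegree H1 H2 a b ≤ H1.degree a := by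
  rw [← card_neighborFinset_eq_degree, neighborFinset_eq_filter]
  exact card_le_card (monotone_filter_right _ fun _ _ => And.left)

theorem crossDegree_le_degree_right (a b : V) : crossDegree H1 H2 a b ≤ H2.degree b :=
  (crossDegree_comm H1 H2 a b).trans_le (crossDegree_le_degree_left H2 H1 b a)

theorem purpleCount_eq_sum_crossDegree :
    purpleCount H1 H2 = ∑ a, crossDegree H1 H2 a a := by
  simp only [purpleCount, crossDegree, card_filter, Fintype.sum_prod_type]

theorem sum_crossDegree_le {D1 D2 : ℕ} (hdeg1 : ∀ a, H1.degree a ≤ D1)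
    (hdeg2 : ∀ a, H2.degree a ≤ D2) (a : V) : ∑ b, crossDegree H1 H2 a b ≤ D1 * D2 :=
  calc ∑ b, crossDegree H1 H2 a b = ∑ x ∈ H1.neighborFinset a, H2.degree x := by
        simp only [crossDegree, card_filter, neighborFinset_eq_filter, sum_filter,
          ← card_neighborFinset_eq_degree, ite_and]
        rw [sum_comm]
        simp [H2.adj_comm]
    _ ≤ #(H1.neighborFinset a) * D2 := sum_le_card_nsmul _ _ _ fun x _ => hdeg2 x
    _ ≤ D1 * D2 :=
        Nat.mul_le_mul_right _ ((card_neighborFinset_eq_degree H1 a).trans_le (hdeg1 a))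

theorem crossDegree_comap_swap_self [DecidableEq V] {i v : V}
    (hnp : ¬(H1.Adj i v ∧ H2.Adj i v)) :
    crossDegree H1 (H2.comap (Equiv.swap i v)) i i = crossDegree H1 H2 i v := by
  refine congrArg card (filter_congr fun x _ => ?_)
  simp only [comap_adj, Equiv.swap_apply_left]
  rcases eq_or_ne x i with rfl | hxi
  · simp
  rcases eq_or_ne x v with rfl | hxv
  · simp only [Equiv.swap_apply_right, SimpleGraph.irrefl, and_false, iff_false]
    exact fun h => hnp ⟨h.1, h.2.symm⟩
  · rw [Equiv.swap_apply_of_ne_of_ne hxi hxv]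

theorem purpleCount_comap_swap [DecidableEq V] {i v : V} (hne : i ≠ v)
    (hnp : ¬(H1.Adj i v ∧ H2.Adj i v)) :
    (purpleCount H1 (H2.comap (Equiv.swap i v)) : ℤ) = purpleCount H1 H2 +
      2 * ((crossDegree H1 H2 i v + crossDegree H1 H2 v i : ℤ) - crossDegree H1 H2 i i -
        crossDegree H1 H2 v v) := by
  set s := Equiv.swap i v
  -- Swapping `i` and `v` in `H2` only changes the rows and columns of `i` and `v`, and leaves
  -- the `{i, v}` block unchanged; so the change is twice the change in those two rows.
  set d : V → V → ℤ := fun a b => (if H1.Adj a b ∧ H2.Adj (s a) (s b) then 1 else 0) -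
    (if H1.Adj a b ∧ H2.Adj a b then 1 else 0)
  have hrow (a : V) :
      ∑ b, d a b = (crossDegree H1 (H2.comap s) a a : ℤ) - crossDegree H1 H2 a a := by
    simp only [d, sum_sub_distrib, crossDegree, card_filter, Nat.cast_sum, Nat.cast_ite,
      Nat.cast_one, Nat.cast_zero]
    rfl
  have hsymm (a b : V) : d a b = d b a := by simp only [d, H1.adj_comm, H2.adj_comm]
  have hout : ∀ a ∉ ({i, v} : Finset V), ∀ b ∉ ({i, v} : Finset V), d a b = 0 := by
    intro a ha b hb
    simp only [mem_insert, mem_singleton, not_or] at ha hb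
    simp [d, s, Equiv.swap_apply_of_ne_of_ne ha.1 ha.2, Equiv.swap_apply_of_ne_of_ne hb.1 hb.2]
  have hin : ∀ a ∈ ({i, v} : Finset V), ∀ b ∈ ({i, v} : Finset V), d a b = 0 := by
    simp [d, s, H2.adj_comm v i]
  have hrow_v : crossDegree H1 (H2.comap s) v v = crossDegree H1 H2 v i := by
    rw [show s = Equiv.swap v i from Equiv.swap_comm i v]
    exact crossDegree_comap_swap_self H1 H2 (by rwa [H1.adj_comm, H2.adj_comm])
  have htotal : (purpleCount H1 (H2.comap s) : ℤ) - purpleCount H1 H2 = ∑ a, ∑ b, d a b := by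
    simp only [purpleCount_eq_sum_crossDegree, hrow, sum_sub_distrib, Nat.cast_sum]
  rw [sum_sum_eq_two_nsmul_of_symm d {i, v} hsymm hout hin, sum_pair hne, hrow, hrow,
    crossDegree_comap_swap_self H1 H2 hnp, hrow_v, two_nsmul] at htotal
  linarith

theorem exists_swap_partner {D1 D2 : ℕ} (hdeg1 : ∀ a, H1.degree a ≤ D1)
    (hdeg2 : ∀ a, H2.degree a ≤ D2) (hcard : (D1 + 1) * (D2 + 1) ≤ Fintype.card V + 1)
    {i : V} (hi : 0 < crossDegree H1 H2 i i) :
    ∃ v, v ≠ i ∧ ¬(H1.Adj i v ∧ H2.Adj i v) ∧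
      crossDegree H1 H2 i v + crossDegree H1 H2 v i ≤ 1 := by
  classical
  set T : Finset V := {v | 2 ≤ crossDegree H1 H2 i v + crossDegree H1 H2 v i}
  set P : Finset V := {v | H1.Adj i v ∧ H2.Adj i v}
  have hT : #T ≤ D1 * D2 := by
    have hsum := calc #T • 2
        ≤ ∑ v ∈ T, (crossDegree H1 H2 i v + crossDegree H1 H2 v i) :=
          card_nsmul_le_sum _ _ _ fun v hv => (mem_filter.1 hv).2
      _ ≤ ∑ v, (crossDegree H1 H2 i v + crossDegree H1 H2 v i) :=
          sum_le_sum_of_subset (subset_univ T)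
      _ = ∑ v, crossDegree H1 H2 i v + ∑ v, crossDegree H2 H1 i v := by
          simp only [sum_add_distrib, crossDegree_comm H1 H2 _ i]
      _ ≤ D1 * D2 + D2 * D1 :=
          add_le_add (sum_crossDegree_le H1 H2 hdeg1 hdeg2 i)
            (sum_crossDegree_le H2 H1 hdeg2 hdeg1 i)
    rw [smul_eq_mul] at hsum
    linarith [Nat.mul_comm D1 D2]
  have hP1 : #P ≤ D1 := (crossDegree_le_degree_left H1 H2 i i).trans (hdeg1 i)
  have hP2 : 0 < D2 := hi.trans_le ((crossDegree_le_degree_right H1 H2 i i).trans (hdeg2 i))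
  have hlt : #(T ∪ P) < #(univ : Finset V) := by
    rw [card_univ]
    have := card_union_le T P
    nlinarith
  obtain ⟨v, -, hv⟩ := exists_mem_notMem_of_card_lt_card hlt
  simp only [mem_union, not_or, T, P, mem_filter, mem_univ, true_and, not_le] at hv
  refine ⟨v, ?_, hv.2, by omega⟩
  rintro rfl
  omega

end SimpleGraph

/-- Eaton: under the BEC condition, a purple-minimizing pair of labellings has
purple graph of maximum degree at most 1. -/
theorem stmt_4 {n : ℕ} (G1 G2 : SimpleGraph (Fin n))
    [DecidableRel G1.Adj] [DecidableRel G2.Adj]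
    (hBEC : (G1.maxDegree + 1) * (G2.maxDegree + 1) ≤ n + 1)
    (σ1 σ2 : Equiv.Perm (Fin n))
    (hmin : ∀ τ1 τ2 : Equiv.Perm (Fin n),
      pcount2 G1 G2 σ1 σ2 ≤ pcount2 G1 G2 τ1 τ2) :
    ∀ i : Fin n, (Finset.univ.filter fun j : Fin n =>
      G1.Adj (σ1.symm i) (σ1.symm j) ∧ G2.Adj (σ2.symm i) (σ2.symm j)).card ≤ 1 := by
  intro i
  -- The labelled graphs; `pcount2 G1 G2 τ1 τ2` is `purpleCount` of them by definition.
  set H1 := G1.comap σ1.symm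
  set H2 := G2.comap σ2.symm
  by_contra! hi
  change 1 < H1.crossDegree H2 i i at hi
  obtain ⟨v, hvi, hnp, hv⟩ := H1.exists_swap_partner H2
    (fun a => (G1.degree_comap_equiv σ1.symm a).trans_le (G1.degree_le_maxDegree _))
    (fun a => (G2.degree_comap_equiv σ2.symm a).trans_le (G2.degree_le_maxDegree _))
    (by simpa using hBEC) (Nat.zero_lt_of_lt hi)
  have hswap := H1.purpleCount_comap_swap H2 hvi.symm hnp
  have hle : H1.purpleCount H2 ≤ H1.purpleCount (H2.comap (Equiv.swap i v)) :=
    hmin σ1 (σ2.trans (Equiv.swap i v))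
  omega
end

section
/- Let G_1, G_2 be graphs on vertex set [n] with maximum degrees Δ_1, Δ_2 and n ≥ (Δ_1+1)(Δ_2+1) - 1, and suppose the labelling pair minimizes the number of purple edges. Let uv be a purple edge. Then for every w ∈ [n] \ {v}, there exists a vertex i' with ui' ∈ E(G_2) and i'w ∈ E(G_1), or a vertex i'' with ui'' ∈ E(G_1) and i''w ∈ E(G_2). -/
/-!
If neither kind of link from `u` to `w` exists, relabel `G_2` by the transposition of `u`
and `w`. Every blue edge touching exactly one of `u`, `w` would then turn purple only through a
link, so no new purple edge appears; but the purple edge `uv` is lost, contradicting minimality.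
-/

/-- Number of (ordered) purple pairs when `G2` is relabelled by `τ`. -/
def pcount {n : ℕ} (G1 G2 : SimpleGraph (Fin n))
    [DecidableRel G1.Adj] [DecidableRel G2.Adj] (τ : Equiv.Perm (Fin n)) : ℕ :=
  (Finset.univ.filter fun p : Fin n × Fin n =>
    G1.Adj p.1 p.2 ∧ G2.Adj (τ p.1) (τ p.2)).card

theorem pcount_lt_pcount {n : ℕ} {G1 G2 : SimpleGraph (Fin n)}
    [DecidableRel G1.Adj] [DecidableRel G2.Adj] {σ τ : Equiv.Perm (Fin n)}
    (hsub : ∀ a b, G1.Adj a b → G2.Adj (τ a) (τ b) → G2.Adj (σ a) (σ b))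
    {a b : Fin n} (hab : G1.Adj a b) (hσ : G2.Adj (σ a) (σ b)) (hτ : ¬ G2.Adj (τ a) (τ b)) :
    pcount G1 G2 τ < pcount G1 G2 σ := by
  refine Finset.card_lt_card ((Finset.ssubset_iff_of_subset ?_).mpr ⟨(a, b), ?_, ?_⟩)
  · intro p hp
    simp only [Finset.mem_filter, Finset.mem_univ, true_and] at hp ⊢
    exact ⟨hp.1, hsub p.1 p.2 hp.1 hp.2⟩
  · simpa using ⟨hab, hσ⟩
  · simpa using fun _ => hτ

theorem SimpleGraph.adj_of_adj_swap_of_no_link {V : Type*} [DecidableEq V]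
    {G1 G2 : SimpleGraph V} {u w : V}
    (hrb : ∀ x, G2.Adj u x → ¬ G1.Adj x w) (hbr : ∀ x, G1.Adj u x → ¬ G2.Adj x w)
    {a b : V} (h1 : G1.Adj a b) (h2 : G2.Adj (Equiv.swap u w a) (Equiv.swap u w b)) :
    G2.Adj a b := by
  open Equiv in
  rcases eq_or_ne a u with rfl | hau
  · rcases eq_or_ne b w with rfl | hbw
    · rw [swap_apply_left, swap_apply_right] at h2
      exact h2.symm
    · rw [swap_apply_left, swap_apply_of_ne_of_ne (G1.ne_of_adj h1).symm hbw] at h2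
      exact absurd h2.symm (hbr b h1)
  rcases eq_or_ne a w with rfl | haw
  · rcases eq_or_ne b u with rfl | hbu
    · rw [swap_apply_right, swap_apply_left] at h2
      exact h2.symm
    · rw [swap_apply_right, swap_apply_of_ne_of_ne hbu (G1.ne_of_adj h1).symm] at h2
      exact absurd h1.symm (hrb b h2)
  rw [swap_apply_of_ne_of_ne hau haw] at h2
  rcases eq_or_ne b u with rfl | hbu
  · rw [swap_apply_left] at h2
    exact absurd h2 (hbr a h1.symm)
  rcases eq_or_ne b w with rfl | hbw
  · rw [swap_apply_right] at h2
    exact absurd h1 (hrb a h2.symm)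
  rwa [swap_apply_of_ne_of_ne hbu hbw] at h2

theorem stmt_5_general {n : ℕ} (G1 G2 : SimpleGraph (Fin n))
    [DecidableRel G1.Adj] [DecidableRel G2.Adj]
    (hmin : ∀ τ : Equiv.Perm (Fin n), pcount G1 G2 1 ≤ pcount G1 G2 τ)
    (u v : Fin n) (hp : G1.Adj u v ∧ G2.Adj u v) :
    ∀ w : Fin n, w ≠ v →
      (∃ i', G2.Adj u i' ∧ G1.Adj i' w) ∨ (∃ i'', G1.Adj u i'' ∧ G2.Adj i'' w) := by
  intro w hwv
  by_contra! ⟨hrb, hbr⟩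
  have hvu : v ≠ u := (G1.ne_of_adj hp.1).symm
  have hlost : ¬ G2.Adj (Equiv.swap u w u) (Equiv.swap u w v) := by
    rw [Equiv.swap_apply_left, Equiv.swap_apply_of_ne_of_ne hvu hwv.symm]
    exact fun h => hbr v hp.1 h.symm
  refine (hmin (Equiv.swap u w)).not_gt (pcount_lt_pcount (σ := 1) ?_ hp.1 hp.2 hlost)
  exact fun _ _ => SimpleGraph.adj_of_adj_swap_of_no_link hrb hbr

/-- Claim 1: from a purple-minimal labelling with purple edge `uv`, every
`w ≠ v` admits a red–blue-link or a blue–red-link from `u`. -/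
theorem stmt_5 {n : ℕ} (G1 G2 : SimpleGraph (Fin n))
    [DecidableRel G1.Adj] [DecidableRel G2.Adj]
    (hn : (G1.maxDegree + 1) * (G2.maxDegree + 1) ≤ n + 1)
    (hmin : ∀ τ : Equiv.Perm (Fin n), pcount G1 G2 1 ≤ pcount G1 G2 τ)
    (u v : Fin n) (hp : G1.Adj u v ∧ G2.Adj u v) :
    ∀ w : Fin n, w ≠ v →
      (∃ i', G2.Adj u i' ∧ G1.Adj i' w) ∨ (∃ i'', G1.Adj u i'' ∧ G2.Adj i'' w) :=
  stmt_5_general G1 G2 hmin u v hp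
end

section
/- In a purple-edge-minimal pair of labellings with purple edge uv, for all a ∈ A*(u) and b ∈ B(u), there is a red–blue-link from a to b, i.e., a vertex a' with aa' ∈ E(G_2) and a'b ∈ E(G_1). -/
/-!
Suppose `a ∈ A*(u)` and `b ∈ B(u)` had no red–blue link. Relabel the red graph by the
3-cycle `u ↦ b ↦ a ↦ u`, fixing every other vertex. The hypotheses on `a` and `b` say exactly
that afterwards none of `u`, `a`, `b` lies on a purple edge, while edges avoiding them are
unchanged; so the purple edge `uv` disappears and nothing new appears, contradicting minimality.
-/

open Finset

variable {n : ℕ} {G1 G2 : SimpleGraph (Fin n)}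

def PurpleFree (G1 G2 : SimpleGraph (Fin n)) (τ : Equiv.Perm (Fin n)) (S : Set (Fin n)) : Prop :=
  ∀ x y, G1.Adj x y → G2.Adj (τ x) (τ y) → x ∉ S

theorem pcount_lt_pcount_one_of_purpleFree [DecidableRel G1.Adj] [DecidableRel G2.Adj]
    {τ : Equiv.Perm (Fin n)} {S : Set (Fin n)} (hfix : ∀ x ∉ S, τ x = x)
    (hclear : PurpleFree G1 G2 τ S)
    {u v : Fin n} (hu : u ∈ S) (huv : G1.Adj u v ∧ G2.Adj u v) :
    pcount G1 G2 τ < pcount G1 G2 1 := by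
  set P : Finset (Fin n × Fin n) := univ.filter fun p => G1.Adj p.1 p.2 ∧ G2.Adj p.1 p.2
  have hsub : (univ.filter fun p : Fin n × Fin n => G1.Adj p.1 p.2 ∧ G2.Adj (τ p.1) (τ p.2)) ⊆
      P.erase (u, v) := by
    intro p hp
    simp only [mem_filter, mem_univ, true_and] at hp
    obtain ⟨h1, h2⟩ := hp
    have hp1 := hclear _ _ h1 h2
    have hp2 := hclear _ _ h1.symm h2.symm
    rw [hfix _ hp1, hfix _ hp2] at h2
    simp only [P, mem_erase, mem_filter, mem_univ, true_and]
    exact ⟨fun h => hp1 (h ▸ hu), h1, h2⟩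
  calc pcount G1 G2 τ ≤ (P.erase (u, v)).card := card_le_card hsub
    _ < P.card := card_erase_lt_of_mem (by simpa [P] using huv)
    _ = pcount G1 G2 1 := rfl

theorem purpleFree_of_not_link {τ : Equiv.Perm (Fin n)} {u a b : Fin n}
    (htu : τ u = b) (htb : τ b = a) (hta : τ a = u)
    (hfix : ∀ x ∉ ({u, a, b} : Set (Fin n)), τ x = x)
    (hub1 : ¬G1.Adj u b) (hub2 : ¬G2.Adj u b) (hua : ¬G2.Adj u a)
    (ha : ∀ z, G2.Adj u z → ¬G1.Adj z a) (hb : ∀ w, G1.Adj u w → ¬G2.Adj w b)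
    (hlink : ∀ y, G2.Adj a y → ¬G1.Adj y b) :
    PurpleFree G1 G2 τ {u, a, b} := by
  intro x y hxy hred hx
  by_cases hy : y ∈ ({u, a, b} : Set (Fin n))
  · obtain rfl | rfl | rfl := hx <;> obtain rfl | rfl | rfl := hy <;>
      simp_all [SimpleGraph.adj_comm]
  · rw [hfix y hy] at hred
    obtain rfl | rfl | rfl := hx
    · exact hb y hxy (htu ▸ hred).symm
    · exact ha y (hta ▸ hred) hxy.symm
    · exact hlink y (htb ▸ hred) hxy.symm

theorem Equiv.Perm.exists_cycle_three {α : Type*} [DecidableEq α] {u a b : α}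
    (hau : a ≠ u) (hbu : b ≠ u) (hab : a ≠ b) :
    ∃ τ : Equiv.Perm α, τ u = b ∧ τ b = a ∧ τ a = u ∧ ∀ x ∉ ({u, a, b} : Set α), τ x = x := by
  refine ⟨Equiv.swap u a * Equiv.swap u b, ?_, ?_, ?_, fun x hx => ?_⟩
  · simp [Equiv.swap_apply_of_ne_of_ne hbu hab.symm]
  · simp
  · simp [Equiv.swap_apply_of_ne_of_ne hau hab]
  · simp only [Set.mem_insert_iff, Set.mem_singleton_iff, not_or] at hx
    simp [Equiv.swap_apply_of_ne_of_ne hx.1 hx.2.2, Equiv.swap_apply_of_ne_of_ne hx.1 hx.2.1]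

theorem stmt_6_general {n : ℕ} (G1 G2 : SimpleGraph (Fin n))
    [DecidableRel G1.Adj] [DecidableRel G2.Adj]
    (hmin : ∀ τ : Equiv.Perm (Fin n), pcount G1 G2 1 ≤ pcount G1 G2 τ)
    (u v : Fin n) (hp : G1.Adj u v ∧ G2.Adj u v) :
    ∀ a ∈ ((G1.neighborFinset u).biUnion (fun x => G2.neighborFinset x)) \
        (G2.neighborFinset u ∪ (G2.neighborFinset u).biUnion (fun x => G1.neighborFinset x)),
      ∀ b ∈ ((G2.neighborFinset u).biUnion (fun x => G1.neighborFinset x)) \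
        (G1.neighborFinset u ∪ G2.neighborFinset u ∪
          (G1.neighborFinset u).biUnion (fun x => G2.neighborFinset x)),
      ∃ a', G2.Adj a a' ∧ G1.Adj a' b := by
  rintro a ha b hb
  simp only [mem_sdiff, mem_union, mem_biUnion, SimpleGraph.mem_neighborFinset, not_or,
    not_exists, not_and] at ha hb
  obtain ⟨-, hua, ha⟩ := ha
  obtain ⟨⟨z, huz, hzb⟩, ⟨hub1, hub2⟩, hb⟩ := hb
  by_contra! hlink
  have hau : a ≠ u := by rintro rfl; exact ha v hp.2 hp.1.symm
  have hbu : b ≠ u := by rintro rfl; exact hb v hp.1 hp.2.symm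
  have hab : a ≠ b := by rintro rfl; exact ha z huz hzb
  obtain ⟨τ, htu, htb, hta, hfix⟩ := Equiv.Perm.exists_cycle_three hau hbu hab
  have hclear := purpleFree_of_not_link htu htb hta hfix hub1 hub2 hua ha hb hlink
  exact (hmin τ).not_gt (pcount_lt_pcount_one_of_purpleFree hfix hclear (by simp) hp)

/-- Claim 2: for all `a ∈ A*(u)` and `b ∈ B(u)` there is a red–blue-link
from `a` to `b`. -/
theorem stmt_6 {n : ℕ} (G1 G2 : SimpleGraph (Fin n))
    [DecidableRel G1.Adj] [DecidableRel G2.Adj]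
    (hBEC : (G1.maxDegree + 1) * (G2.maxDegree + 1) ≤ n + 1)
    (hmin : ∀ τ : Equiv.Perm (Fin n), pcount G1 G2 1 ≤ pcount G1 G2 τ)
    (u v : Fin n) (hp : G1.Adj u v ∧ G2.Adj u v) :
    ∀ a ∈ ((G1.neighborFinset u).biUnion (fun x => G2.neighborFinset x)) \
        (G2.neighborFinset u ∪ (G2.neighborFinset u).biUnion (fun x => G1.neighborFinset x)),
      ∀ b ∈ ((G2.neighborFinset u).biUnion (fun x => G1.neighborFinset x)) \
        (G1.neighborFinset u ∪ G2.neighborFinset u ∪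
          (G1.neighborFinset u).biUnion (fun x => G2.neighborFinset x)),
      ∃ a', G2.Adj a a' ∧ G1.Adj a' b :=
  stmt_6_general G1 G2 hmin u v hp
end

section
/- In a purple-edge-minimal pair of labellings with purple edge uv of graphs G_1, G_2 on [n] with n ≥ (Δ_1+1)(Δ_2+1) - 1 and Δ_1, Δ_2 ≥ 2, we have |A*(u)| ≥ Δ_1 - 1 and |B*(u)| ≥ Δ_2 - 1; in particular both sets are nonempty. -/
open Finset

section Links

variable {V : Type*} [Fintype V] [DecidableEq V]

/-- `linkFinset G₁ G₂ u` is the paper's `N₂(N₁(u))`. -/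
def linkFinset (G H : SimpleGraph V) [DecidableRel G.Adj] [DecidableRel H.Adj] (u : V) :
    Finset V :=
  (G.neighborFinset u).biUnion fun x => H.neighborFinset x

variable (G H : SimpleGraph V) [DecidableRel G.Adj] [DecidableRel H.Adj]

theorem mem_linkFinset {u w : V} : w ∈ linkFinset G H u ↔ ∃ x, G.Adj u x ∧ H.Adj x w := by
  simp [linkFinset]

theorem card_linkFinset_le (u : V) : #(linkFinset G H u) ≤ G.maxDegree * H.maxDegree := by
  calc #(linkFinset G H u)
      ≤ #(G.neighborFinset u) * H.maxDegree :=
        card_biUnion_le_card_mul _ _ _ fun x _ => by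
          simpa using H.degree_le_maxDegree x
    _ ≤ G.maxDegree * H.maxDegree := by
        gcongr
        simpa using G.degree_le_maxDegree u

theorem maxDegree_sub_one_le_card_sdiff_linkFinset {u v : V}
    (hn : (G.maxDegree + 1) * (H.maxDegree + 1) ≤ Fintype.card V + 1)
    (hcover : ∀ w, w ≠ v → w ∈ linkFinset G H u ∪ linkFinset H G u) :
    G.maxDegree - 1 ≤ #(linkFinset G H u \ (H.neighborFinset u ∪ linkFinset H G u)) := by
  have hB : #(linkFinset H G u) ≤ G.maxDegree * H.maxDegree :=
    (card_linkFinset_le H G u).trans_eq (mul_comm _ _)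
  have hNu : #(H.neighborFinset u) ≤ H.maxDegree := by simpa using H.degree_le_maxDegree u
  set A := linkFinset G H u
  set B := linkFinset H G u
  set N := H.neighborFinset u
  have hcard : Fintype.card V - 1 ≤ #(A ∪ B) := by
    calc Fintype.card V - 1 = #(univ.erase v) := by simp
      _ ≤ #(A ∪ B) := card_le_card fun w hw => hcover w (ne_of_mem_erase hw)
  have hsplit : #(A ∪ B) ≤ #(A \ (N ∪ B)) + (#N + #B) := by
    calc #(A ∪ B)
        ≤ #(A \ (N ∪ B) ∪ (N ∪ B)) := by
          rw [sdiff_union_self_eq_union]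
          exact card_le_card (union_subset_union_right subset_union_right)
      _ ≤ #(A \ (N ∪ B)) + (#N + #B) :=
          (card_union_le _ _).trans (add_le_add_right (card_union_le _ _) _)
  have hn' : G.maxDegree * H.maxDegree + G.maxDegree + H.maxDegree ≤ Fintype.card V := by
    nlinarith
  omega

/-- If exactly one endpoint of `ab` lies in `{u, w}`, then `ab` and its image under `(u w)` form a
link from `u` to `w`; otherwise `(u w)` fixes `{a, b}`. -/
theorem adj_of_adj_swap {u w a b : V} (hw : w ∉ linkFinset G H u ∪ linkFinset H G u)
    (hG : G.Adj a b) (hH : H.Adj (Equiv.swap u w a) (Equiv.swap u w b)) : H.Adj a b := by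
  simp only [mem_union, mem_linkFinset, not_or, not_exists, not_and] at hw
  rw [Equiv.swap_apply_def, Equiv.swap_apply_def] at hH
  grind [SimpleGraph.adj_comm, SimpleGraph.irrefl]

end Links

theorem pcount_swap_lt {n : ℕ} (G1 G2 : SimpleGraph (Fin n))
    [DecidableRel G1.Adj] [DecidableRel G2.Adj] {u v w : Fin n}
    (h1 : G1.Adj u v) (h2 : G2.Adj u v) (hwv : w ≠ v)
    (hw : w ∉ linkFinset G1 G2 u ∪ linkFinset G2 G1 u) :
    pcount G1 G2 (Equiv.swap u w) < pcount G1 G2 1 := by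
  unfold pcount
  refine card_lt_card ⟨fun p hp => ?_, fun hsub => ?_⟩
  · simp only [mem_filter, mem_univ, true_and] at hp
    exact mem_filter.2 ⟨mem_univ p, hp.1, adj_of_adj_swap G1 G2 hw hp.1 hp.2⟩
  · have huv := hsub (mem_filter.2 ⟨mem_univ (u, v), h1, h2⟩)
    simp only [mem_filter, mem_univ, true_and, Equiv.swap_apply_left,
      Equiv.swap_apply_of_ne_of_ne h1.ne.symm hwv.symm] at huv
    exact hw (mem_union_left _ ((mem_linkFinset G1 G2).2 ⟨v, h1, huv.2.symm⟩))

theorem mem_linkFinset_union_of_minimal {n : ℕ} (G1 G2 : SimpleGraph (Fin n))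
    [DecidableRel G1.Adj] [DecidableRel G2.Adj]
    (hmin : ∀ τ : Equiv.Perm (Fin n), pcount G1 G2 1 ≤ pcount G1 G2 τ)
    {u v w : Fin n} (h1 : G1.Adj u v) (h2 : G2.Adj u v) (hwv : w ≠ v) :
    w ∈ linkFinset G1 G2 u ∪ linkFinset G2 G1 u := by
  by_contra hw
  exact (hmin _).not_gt (pcount_swap_lt G1 G2 h1 h2 hwv hw)

/-- Claim 3: `|A*(u)| ≥ Δ₁ - 1`, `|B*(u)| ≥ Δ₂ - 1`; in particular both sets
are nonempty. -/
theorem stmt_7 {n : ℕ} (G1 G2 : SimpleGraph (Fin n))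
    [DecidableRel G1.Adj] [DecidableRel G2.Adj]
    (hn : (G1.maxDegree + 1) * (G2.maxDegree + 1) ≤ n + 1)
    (hΔ12 : G2.maxDegree ≤ G1.maxDegree) (hΔ2 : 2 ≤ G2.maxDegree)
    (hmin : ∀ τ : Equiv.Perm (Fin n), pcount G1 G2 1 ≤ pcount G1 G2 τ)
    (u v : Fin n) (hp : G1.Adj u v ∧ G2.Adj u v) :
    G1.maxDegree - 1 ≤ (((G1.neighborFinset u).biUnion (fun x => G2.neighborFinset x)) \
        (G2.neighborFinset u ∪ (G2.neighborFinset u).biUnion (fun x => G1.neighborFinset x))).card ∧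
    G2.maxDegree - 1 ≤ (((G2.neighborFinset u).biUnion (fun x => G1.neighborFinset x)) \
        (G1.neighborFinset u ∪ (G1.neighborFinset u).biUnion (fun x => G2.neighborFinset x))).card ∧
    (((G1.neighborFinset u).biUnion (fun x => G2.neighborFinset x)) \
        (G2.neighborFinset u ∪ (G2.neighborFinset u).biUnion (fun x => G1.neighborFinset x))).Nonempty ∧
    (((G2.neighborFinset u).biUnion (fun x => G1.neighborFinset x)) \
        (G1.neighborFinset u ∪ (G1.neighborFinset u).biUnion (fun x => G2.neighborFinset x))).Nonempty := by
  have hcover w (hwv : w ≠ v) := mem_linkFinset_union_of_minimal G1 G2 hmin hp.1 hp.2 hwv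
  have hA : G1.maxDegree - 1 ≤ _ :=
    maxDegree_sub_one_le_card_sdiff_linkFinset G1 G2 (by simpa using hn) hcover
  have hB : G2.maxDegree - 1 ≤ _ :=
    maxDegree_sub_one_le_card_sdiff_linkFinset G2 G1 (by simpa [mul_comm] using hn)
      fun w hwv => union_comm (linkFinset G1 G2 u) _ ▸ hcover w hwv
  exact ⟨hA, hB, card_pos.1 ((by omega : 0 < G1.maxDegree - 1).trans_le hA),
    card_pos.1 ((by omega : 0 < G2.maxDegree - 1).trans_le hB)⟩
end

section
/- Let G_1 be a graph containing no 4-, 6-, or 8-cycle. Let x_1, x_2, x_1*, x_2* be four distinct vertices with no G_1-edges among {x_1 x_1*, x_1 x_2*, x_2 x_1*, x_2 x_2*}, and suppose there exist vertices y_{11}, y_{12}, y_{21}, y_{22}, each outside {x_1, x_2, x_1*, x_2*}, with y_{11} ≠ y_{21}, such that y_{ij} is adjacent in G_1 to both x_i* and x_j for all i, j ∈ {1,2}. Then this configuration is impossible; i.e., such vertices cannot exist. -/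
open SimpleGraph

lemma cyc4 {V : Type*} {G : SimpleGraph V} {a b c d : V}
    (hab : G.Adj a b) (hbc : G.Adj b c) (hcd : G.Adj c d) (hda : G.Adj d a)
    (hac : a ≠ c) (hbd : b ≠ d) :
    ∃ w : G.Walk a a, w.IsCycle ∧ w.length = 4 := by
  refine ⟨.cons hab (.cons hbc (.cons hcd (.cons hda .nil))), ?_, rfl⟩
  have h1 := hab.ne; have h2 := hbc.ne; have h3 := hcd.ne; have h4 := hda.ne
  simp [Walk.isCycle_def, Walk.isTrail_def, Sym2.eq, Sym2.rel_iff', List.Nodup]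
  aesop

lemma cyc6 {V : Type*} {G : SimpleGraph V} {a b c d e f : V}
    (hab : G.Adj a b) (hbc : G.Adj b c) (hcd : G.Adj c d) (hde : G.Adj d e)
    (hef : G.Adj e f) (hfa : G.Adj f a)
    (hac : a ≠ c) (had : a ≠ d) (hae : a ≠ e)
    (hbd : b ≠ d) (hbe : b ≠ e) (hbf : b ≠ f)
    (hce : c ≠ e) (hcf : c ≠ f) (hdf : d ≠ f) :
    ∃ w : G.Walk a a, w.IsCycle ∧ w.length = 6 := by
  refine ⟨.cons hab (.cons hbc (.cons hcd (.cons hde (.cons hef (.cons hfa .nil))))), ?_, rfl⟩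
  have h1 := hab.ne; have h2 := hbc.ne; have h3 := hcd.ne; have h4 := hde.ne
  have h5 := hef.ne; have h6 := hfa.ne
  simp [Walk.isCycle_def, Walk.isTrail_def, Sym2.eq, Sym2.rel_iff', List.Nodup]
  aesop

lemma cyc8 {V : Type*} {G : SimpleGraph V} {a b c d e f g h : V}
    (hab : G.Adj a b) (hbc : G.Adj b c) (hcd : G.Adj c d) (hde : G.Adj d e)
    (hef : G.Adj e f) (hfg : G.Adj f g) (hgh : G.Adj g h) (hha : G.Adj h a)
    (hac : a ≠ c) (had : a ≠ d) (hae : a ≠ e) (haf : a ≠ f) (hag : a ≠ g)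
    (hbd : b ≠ d) (hbe : b ≠ e) (hbf : b ≠ f) (hbg : b ≠ g) (hbh : b ≠ h)
    (hce : c ≠ e) (hcf : c ≠ f) (hcg : c ≠ g) (hch : c ≠ h)
    (hdf : d ≠ f) (hdg : d ≠ g) (hdh : d ≠ h)
    (heg : e ≠ g) (heh : e ≠ h) (hfh : f ≠ h) :
    ∃ w : G.Walk a a, w.IsCycle ∧ w.length = 8 := by
  refine ⟨.cons hab (.cons hbc (.cons hcd (.cons hde (.cons hef (.cons hfg
    (.cons hgh (.cons hha .nil))))))), ?_, rfl⟩
  have h1 := hab.ne; have h2 := hbc.ne; have h3 := hcd.ne; have h4 := hde.ne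
  have h5 := hef.ne; have h6 := hfg.ne; have h7 := hgh.ne; have h8 := hha.ne
  simp [Walk.isCycle_def, Walk.isTrail_def, Sym2.eq, Sym2.rel_iff', List.Nodup]
  aesop

/-- The eight-vertex configuration in the proof of Claim 4 is impossible when
`G1` has no 4-, 6- or 8-cycle. -/
theorem stmt_10 {V : Type*} (G1 : SimpleGraph V)
    (hcyc : ∀ (v : V) (c : G1.Walk v v), c.IsCycle →
      c.length ≠ 4 ∧ c.length ≠ 6 ∧ c.length ≠ 8)
    (x1 x2 xs1 xs2 : V)
    (hdist : x1 ≠ x2 ∧ x1 ≠ xs1 ∧ x1 ≠ xs2 ∧ x2 ≠ xs1 ∧ x2 ≠ xs2 ∧ xs1 ≠ xs2)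
    (hne : ¬ G1.Adj x1 xs1 ∧ ¬ G1.Adj x1 xs2 ∧ ¬ G1.Adj x2 xs1 ∧ ¬ G1.Adj x2 xs2)
    (y11 y12 y21 y22 : V)
    (hy : ∀ y ∈ ({y11, y12, y21, y22} : Set V),
      y ≠ x1 ∧ y ≠ x2 ∧ y ≠ xs1 ∧ y ≠ xs2)
    (hy1121 : y11 ≠ y21)
    (h11 : G1.Adj y11 xs1 ∧ G1.Adj y11 x1)
    (h12 : G1.Adj y12 xs1 ∧ G1.Adj y12 x2)
    (h21 : G1.Adj y21 xs2 ∧ G1.Adj y21 x1)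
    (h22 : G1.Adj y22 xs2 ∧ G1.Adj y22 x2) : False := by
  obtain ⟨d12, d1s1, d1s2, d2s1, d2s2, ds12⟩ := hdist
  obtain ⟨hY11, hY12, hY21, hY22⟩ : (y11 ≠ x1 ∧ y11 ≠ x2 ∧ y11 ≠ xs1 ∧ y11 ≠ xs2) ∧
      (y12 ≠ x1 ∧ y12 ≠ x2 ∧ y12 ≠ xs1 ∧ y12 ≠ xs2) ∧
      (y21 ≠ x1 ∧ y21 ≠ x2 ∧ y21 ≠ xs1 ∧ y21 ≠ xs2) ∧
      (y22 ≠ x1 ∧ y22 ≠ x2 ∧ y22 ≠ xs1 ∧ y22 ≠ xs2) := by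
    exact ⟨hy y11 (by simp), hy y12 (by simp), hy y21 (by simp), hy y22 (by simp)⟩
  by_cases hA : y12 = y22
  · by_cases hB : y11 = y12
    · -- y11 = y12 = y22, adjacent to xs2; 4-cycle y11 x1 y21 xs2
      obtain ⟨w, hw, hl⟩ := cyc4 h11.2 h21.2.symm h21.1 (by rw [hB, hA]; exact h22.1.symm)
        hy1121 d1s2
      exact (hcyc _ w hw).1 hl
    · by_cases hC : y21 = y12
      · -- y21 = y12 adjacent to xs1; 4-cycle y21 x1 y11 xs1
        obtain ⟨w, hw, hl⟩ := cyc4 h21.2 h11.2.symm h11.1 (by rw [hC]; exact h12.1.symm)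
          hy1121.symm d1s1
        exact (hcyc _ w hw).1 hl
      · -- 6-cycle xs1 y11 x1 y21 xs2 y12
        obtain ⟨w, hw, hl⟩ := cyc6 h11.1.symm h11.2 h21.2.symm h21.1
          (by rw [hA]; exact h22.1.symm) h12.1
          d1s1.symm hY21.2.2.1.symm ds12 hy1121 hY11.2.2.2 (fun e => hB e)
          d1s2 hY12.1.symm (fun e => hC e)
        exact (hcyc _ w hw).2.1 hl
  · by_cases hB : y11 = y12
    · by_cases hC : y21 = y22
      · -- 4-cycle x1 y11 x2 y21
        obtain ⟨w, hw, hl⟩ := cyc4 h11.2.symm (by rw [hB]; exact h12.2)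
          (by rw [hC]; exact h22.2.symm) h21.2 d12 hy1121
        exact (hcyc _ w hw).1 hl
      · -- 6-cycle x1 y11 x2 y22 xs2 y21
        obtain ⟨w, hw, hl⟩ := cyc6 h11.2.symm (by rw [hB]; exact h12.2)
          h22.2.symm h22.1 h21.1.symm h21.2
          d12 hY22.1.symm d1s2 (fun e => hA (hB ▸ e)) hY11.2.2.2 hy1121
          d2s2 hY21.2.1.symm (fun e => hC e.symm)
        exact (hcyc _ w hw).2.1 hl
    · by_cases hC : y21 = y22
      · -- 6-cycle x1 y21 x2 y12 xs1 y11
        obtain ⟨w, hw, hl⟩ := cyc6 h21.2.symm (by rw [hC]; exact h22.2)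
          h12.2.symm h12.1 h11.1.symm h11.2
          d12 hY12.1.symm d1s1 (fun e => hA ((hC ▸ e).symm)) hY21.2.2.1 hy1121.symm
          d2s1 hY11.2.1.symm (fun e => hB e.symm)
        exact (hcyc _ w hw).2.1 hl
      · by_cases hD : y11 = y22
        · -- 4-cycle y11 x1 y21 xs2
          obtain ⟨w, hw, hl⟩ := cyc4 h11.2 h21.2.symm h21.1
            (by rw [hD]; exact h22.1.symm) hy1121 d1s2
          exact (hcyc _ w hw).1 hl
        · by_cases hE : y12 = y21
          · -- 4-cycle y12 x1 y11 xs1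
            obtain ⟨w, hw, hl⟩ := cyc4 (by rw [hE]; exact h21.2) h11.2.symm h11.1
              h12.1.symm (fun e => hB e.symm) d1s1
            exact (hcyc _ w hw).1 hl
          · -- all distinct: 8-cycle x1 y11 xs1 y12 x2 y22 xs2 y21
            obtain ⟨w, hw, hl⟩ := cyc8 h11.2.symm h11.1 h12.1.symm h12.2
              h22.2.symm h22.1 h21.1.symm h21.2
              d1s1 hY12.1.symm d12 hY22.1.symm d1s2
              (fun e => hB e) hY11.2.1 hD hY11.2.2.2 hy1121
              d2s1.symm hY22.2.2.1.symm ds12 hY21.2.2.1.symm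
              (fun e => hA e) hY12.2.2.2 hE
              d2s2 hY21.2.1.symm (fun e => hC e.symm)
            exact (hcyc _ w hw).2.2 hl
end

section
/- Let G_1 and G_2 be graphs on a common vertex set with maximum degrees Δ_1 ≥ Δ_2, neither containing a 4-, 6-, or 8-cycle. Then for any integer t ≥ 2 and distinct vertices a, b: |N_1(N_2(a)) ∩ N_1(N_2(b))| ≤ Δ_1 + Δ_2 + √(1.37(t-1))·Δ_2^{3/2} + (√1.37/(0.37√(t-1)))·Δ_1·√Δ_2 + Δ_1Δ_2/t. -/
open Finset

lemma aux_one_le_of_sq {x a : ℝ} (hx : 0 ≤ x) (ha : 1 ≤ a) (h : x ^ 2 = a) : 1 ≤ x := by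
  nlinarith

lemma aux_c117 {x : ℝ} (hx : 0 ≤ x) (h : x ^ 2 = 1.37) : 1.17 ≤ x := by nlinarith

lemma aux_amgm {u w s : ℝ} (hu : 0 ≤ u) (hw : 0 ≤ w) (hs : 0 ≤ s)
    (hp : u * w = (1.37 / 0.37) * s ^ 2) : 3.84 * s ≤ u + w := by
  have h1 : (3.84 * s) ^ 2 ≤ (u + w) ^ 2 := by nlinarith [sq_nonneg (u - w)]
  have h2 := Real.sqrt_le_sqrt h1
  rwa [Real.sqrt_sq (by positivity), Real.sqrt_sq (by linarith)] at h2

lemma aux_fin {r1 r2 : ℝ} (h21 : 1 ≤ r2) (h12 : r2 ≤ r1) :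
    2 * r2 ^ 2 + r2 ^ 2 * r2 ≤ 3.84 * (r1 * r2 ^ 2) := by
  nlinarith [mul_le_mul_of_nonneg_left h12 (sq_nonneg r2),
    mul_le_mul_of_nonneg_left (le_trans h21 h12) (sq_nonneg r2)]

lemma aux_kst {n m e : ℝ} (hen : 0 ≤ n) (hem : 0 ≤ m) (hee : 0 ≤ e)
    (hCS : e ^ 2 ≤ n * (m * m + e)) : e ≤ n + m * Real.sqrt n := by
  rcases le_or_gt e n with h | h
  · nlinarith [mul_nonneg hem (Real.sqrt_nonneg n)]
  · have h2 : (e - n) ^ 2 ≤ n * m ^ 2 := by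
      nlinarith [mul_nonneg hen (sub_nonneg.mpr h.le)]
    have h3 := Real.sqrt_le_sqrt h2
    rw [Real.sqrt_sq (by linarith : (0:ℝ) ≤ e - n)] at h3
    have hsq : Real.sqrt (n * m ^ 2) = m * Real.sqrt n := by
      rw [Real.sqrt_mul hen, Real.sqrt_sq hem]; ring
    rw [hsq] at h3
    linarith

lemma c4gen {V : Type*} (G : SimpleGraph V) {x y u v : V}
    (hxy : x ≠ y) (huv : u ≠ v)
    (h1 : G.Adj x u) (h2 : G.Adj y u) (h3 : G.Adj x v) (h4 : G.Adj y v) :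
    ∃ (c : G.Walk x x), c.IsCycle ∧ c.length = 4 := by
  refine ⟨.cons h1 (.cons h2.symm (.cons h4 (.cons h3.symm .nil))), ?_, rfl⟩
  have := h1.ne; have := h2.ne; have := h3.ne; have := h4.ne
  simp_all [SimpleGraph.Walk.isCycle_def, SimpleGraph.Walk.isTrail_def, Sym2.eq_iff, ne_comm]

lemma noC4 {V : Type*} (G : SimpleGraph V)
    (h : ∀ (v : V) (c : G.Walk v v), c.IsCycle → c.length ≠ 4 ∧ c.length ≠ 6 ∧ c.length ≠ 8)
    {x y u v : V} (hxy : x ≠ y) (huv : u ≠ v)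
    (h1 : G.Adj x u) (h2 : G.Adj y u) (h3 : G.Adj x v) (h4 : G.Adj y v) : False := by
  obtain ⟨c, hc, hl⟩ := c4gen G hxy huv h1 h2 h3 h4
  exact (h x c hc).1 hl

lemma c8gen {V : Type*} (G : SimpleGraph V) {x y x' y' v1 v2 v3 v4 : V}
    (d1 : x ≠ x') (d2 : y ≠ y') (d3 : x ≠ y) (d4 : x ≠ y') (d5 : x' ≠ y) (d6 : x' ≠ y')
    (e12 : v1 ≠ v2) (e13 : v1 ≠ v3) (e14 : v1 ≠ v4) (e23 : v2 ≠ v3) (e24 : v2 ≠ v4) (e34 : v3 ≠ v4)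
    (f1x : v1 ≠ x) (f1x' : v1 ≠ x') (f1y : v1 ≠ y) (f1y' : v1 ≠ y')
    (f2x : v2 ≠ x) (f2x' : v2 ≠ x') (f2y : v2 ≠ y) (f2y' : v2 ≠ y')
    (f3x : v3 ≠ x) (f3x' : v3 ≠ x') (f3y : v3 ≠ y) (f3y' : v3 ≠ y')
    (f4x : v4 ≠ x) (f4x' : v4 ≠ x') (f4y : v4 ≠ y) (f4y' : v4 ≠ y')
    (a1 : G.Adj v1 x) (a2 : G.Adj v1 y) (a3 : G.Adj v2 x) (a4 : G.Adj v2 y')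
    (a5 : G.Adj v3 x') (a6 : G.Adj v3 y) (a7 : G.Adj v4 x') (a8 : G.Adj v4 y') :
    ∃ (c : G.Walk x x), c.IsCycle ∧ c.length = 8 := by
  refine ⟨.cons a1.symm (.cons a2 (.cons a6.symm (.cons a5 (.cons a7.symm (.cons a8
    (.cons a4.symm (.cons a3 .nil))))))), ?_, rfl⟩
  simp_all [SimpleGraph.Walk.isCycle_def, SimpleGraph.Walk.isTrail_def, Sym2.eq_iff, ne_comm]

lemma noC8 {V : Type*} (G : SimpleGraph V)
    (h : ∀ (v : V) (c : G.Walk v v), c.IsCycle → c.length ≠ 4 ∧ c.length ≠ 6 ∧ c.length ≠ 8)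
    {x y x' y' v1 v2 v3 v4 : V}
    (d1 : x ≠ x') (d2 : y ≠ y') (d3 : x ≠ y) (d4 : x ≠ y') (d5 : x' ≠ y) (d6 : x' ≠ y')
    (e12 : v1 ≠ v2) (e13 : v1 ≠ v3) (e14 : v1 ≠ v4) (e23 : v2 ≠ v3) (e24 : v2 ≠ v4) (e34 : v3 ≠ v4)
    (f1x : v1 ≠ x) (f1x' : v1 ≠ x') (f1y : v1 ≠ y) (f1y' : v1 ≠ y')
    (f2x : v2 ≠ x) (f2x' : v2 ≠ x') (f2y : v2 ≠ y) (f2y' : v2 ≠ y')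
    (f3x : v3 ≠ x) (f3x' : v3 ≠ x') (f3y : v3 ≠ y) (f3y' : v3 ≠ y')
    (f4x : v4 ≠ x) (f4x' : v4 ≠ x') (f4y : v4 ≠ y) (f4y' : v4 ≠ y')
    (a1 : G.Adj v1 x) (a2 : G.Adj v1 y) (a3 : G.Adj v2 x) (a4 : G.Adj v2 y')
    (a5 : G.Adj v3 x') (a6 : G.Adj v3 y) (a7 : G.Adj v4 x') (a8 : G.Adj v4 y') : False := by
  obtain ⟨c, hc, hl⟩ := c8gen G d1 d2 d3 d4 d5 d6 e12 e13 e14 e23 e24 e34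
    f1x f1x' f1y f1y' f2x f2x' f2y f2y' f3x f3x' f3y f3y' f4x f4x' f4y f4y'
    a1 a2 a3 a4 a5 a6 a7 a8
  exact (h x c hc).2.2 hl

lemma key {V : Type*} [Fintype V] [DecidableEq V] (G1 G2 : SimpleGraph V)
    [DecidableRel G1.Adj] [DecidableRel G2.Adj]
    (hcyc1 : ∀ (v : V) (c : G1.Walk v v), c.IsCycle →
      c.length ≠ 4 ∧ c.length ≠ 6 ∧ c.length ≠ 8)
    (hcyc2 : ∀ (v : V) (c : G2.Walk v v), c.IsCycle →
      c.length ≠ 4 ∧ c.length ≠ 6 ∧ c.length ≠ 8)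
    (a b : V) (hab : a ≠ b) :
    ((((G2.neighborFinset a).biUnion fun x => G1.neighborFinset x) ∩
      ((G2.neighborFinset b).biUnion fun x => G1.neighborFinset x)).card : ℝ) ≤
      (G1.maxDegree : ℝ) + 3 * G2.maxDegree + G2.maxDegree * Real.sqrt G2.maxDegree := by
  classical
  set A := G2.neighborFinset a with hA
  set B := G2.neighborFinset b with hB
  set I := ((A.biUnion fun x => G1.neighborFinset x) ∩
      (B.biUnion fun x => G1.neighborFinset x)) with hI
  set A' := A \ B with hA'
  set B' := B \ A with hB'
  set C := A ∩ B with hC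
  set NC := C.biUnion (fun x => G1.neighborFinset x) with hNC
  set K := (I \ NC) \ (A' ∪ B') with hK
  -- |C| ≤ 1
  have hCcard : C.card ≤ 1 := by
    by_contra h
    push_neg at h
    obtain ⟨x, hx, y, hy, hxy⟩ := Finset.one_lt_card.mp h
    rw [hC, Finset.mem_inter, hA, hB, SimpleGraph.mem_neighborFinset,
      SimpleGraph.mem_neighborFinset] at hx hy
    exact noC4 G2 hcyc2 hab hxy hx.1 hx.2 hy.1 hy.2
  -- |NC| ≤ Δ1
  have hNCcard : NC.card ≤ G1.maxDegree := by
    calc NC.card ≤ C.card * G1.maxDegree :=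
          Finset.card_biUnion_le_card_mul _ _ _ (fun x _ => G1.degree_le_maxDegree x)
    _ ≤ 1 * G1.maxDegree := Nat.mul_le_mul_right _ hCcard
    _ = G1.maxDegree := one_mul _
  -- basic disjointness
  have hAB' : ∀ {x y : V}, x ∈ A' → y ∈ B' → x ≠ y := by
    intro x y hx hy h
    rw [hA', Finset.mem_sdiff] at hx
    rw [hB', Finset.mem_sdiff] at hy
    exact hx.2 (h ▸ hy.1)
  have hKout : ∀ v ∈ K, v ∉ A' ∧ v ∉ B' := by
    intro v hv
    rw [hK, Finset.mem_sdiff, Finset.mem_union] at hv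
    tauto
  -- each vertex of K has a neighbour in A' and in B'
  have hKprop : ∀ v : V, v ∈ K → ∃ x y : V, x ∈ A' ∧ y ∈ B' ∧ G1.Adj v x ∧ G1.Adj v y := by
    intro v hv
    rw [hK, Finset.mem_sdiff, Finset.mem_sdiff] at hv
    obtain ⟨⟨hvI, hvNC⟩, -⟩ := hv
    rw [hI, Finset.mem_inter, Finset.mem_biUnion, Finset.mem_biUnion] at hvI
    obtain ⟨⟨x, hxA, hvx⟩, ⟨y, hyB, hvy⟩⟩ := hvI
    rw [SimpleGraph.mem_neighborFinset] at hvx hvy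
    have hxA' : x ∈ A' := by
      rw [hA', Finset.mem_sdiff]
      refine ⟨hxA, fun hxB => hvNC ?_⟩
      rw [hNC, Finset.mem_biUnion]
      exact ⟨x, by rw [hC, Finset.mem_inter]; exact ⟨hxA, hxB⟩,
        by rwa [SimpleGraph.mem_neighborFinset]⟩
    have hyB' : y ∈ B' := by
      rw [hB', Finset.mem_sdiff]
      refine ⟨hyB, fun hyA => hvNC ?_⟩
      rw [hNC, Finset.mem_biUnion]
      exact ⟨y, by rw [hC, Finset.mem_inter]; exact ⟨hyA, hyB⟩,
        by rwa [SimpleGraph.mem_neighborFinset]⟩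
    exact ⟨x, y, hxA', hyB', hvx.symm, hvy.symm⟩
  choose! xf yf hxf hyf haxf hayf using hKprop
  -- injectivity of v ↦ (xf v, yf v)
  have hinj : ∀ v ∈ K, ∀ w ∈ K, xf v = xf w → yf v = yf w → v = w := by
    intro v hv w hw hxx hyy
    by_contra hvw
    exact noC4 G1 hcyc1 (hAB' (hxf v hv) (hyf v hv)) hvw
      (haxf v hv).symm (hayf v hv).symm
      (hxx ▸ (haxf w hw).symm) (hyy ▸ (hayf w hw).symm)
  set Y : V → Finset V := fun x => (K.filter (fun v => xf v = x)).image yf with hY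
  have hYcard : ∀ x, (K.filter (fun v => xf v = x)).card = (Y x).card := by
    intro x
    rw [hY]
    refine (Finset.card_image_of_injOn ?_).symm
    intro v hv w hw hyy
    rw [Finset.mem_coe, Finset.mem_filter] at hv hw
    exact hinj v hv.1 w hw.1 (hv.2.trans hw.2.symm) hyy
  have hYsub : ∀ x, Y x ⊆ B' := by
    intro x z hz
    rw [hY, Finset.mem_image] at hz
    obtain ⟨v, hv, rfl⟩ := hz
    rw [Finset.mem_filter] at hv
    exact hyf v hv.1
  have hcardK : K.card = ∑ x ∈ A', (Y x).card := by
    rw [Finset.card_eq_sum_card_fiberwise (f := xf) (t := A') (fun v hv => hxf v hv)]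
    exact Finset.sum_congr rfl fun x _ => hYcard x
  -- disjointness of offDiags via C8-freeness
  have hdisj : ∀ x ∈ A', ∀ x' ∈ A', x ≠ x' →
      Disjoint ((Y x).offDiag) ((Y x').offDiag) := by
    intro x hx x' hx' hxx'
    rw [Finset.disjoint_left]
    rintro ⟨y, y'⟩ hp hp'
    rw [Finset.mem_offDiag] at hp hp'
    obtain ⟨hy1, hy1', hyy'⟩ := hp
    obtain ⟨hy2, hy2', -⟩ := hp'
    have getv : ∀ {xx yy : V}, yy ∈ Y xx → ∃ v ∈ K, xf v = xx ∧ yf v = yy := by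
      intro xx yy h
      rw [hY, Finset.mem_image] at h
      obtain ⟨v, hv, rfl⟩ := h
      rw [Finset.mem_filter] at hv
      exact ⟨v, hv.1, hv.2, rfl⟩
    obtain ⟨v1, hv1, hv1x, hv1y⟩ := getv hy1
    obtain ⟨v2, hv2, hv2x, hv2y⟩ := getv hy1'
    obtain ⟨v3, hv3, hv3x, hv3y⟩ := getv hy2
    obtain ⟨v4, hv4, hv4x, hv4y⟩ := getv hy2'
    have hyB : y ∈ B' := hYsub x hy1
    have hy'B : y' ∈ B' := hYsub x hy1'
    have hne : ∀ {v : V}, v ∈ K → ∀ {z : V}, z ∈ A' ∪ B' → v ≠ z := by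
      intro v hv z hz h
      obtain ⟨h1, h2⟩ := hKout v hv
      rw [Finset.mem_union] at hz
      cases hz with
      | inl h' => exact h1 (h ▸ h')
      | inr h' => exact h2 (h ▸ h')
    have hvv : ∀ {v w : V}, v ∈ K → w ∈ K → (xf v ≠ xf w ∨ yf v ≠ yf w) → v ≠ w := by
      rintro v w hv hw h rfl
      rcases h with h | h <;> exact h rfl
    refine noC8 G1 hcyc1 hxx' hyy' (hAB' hx hyB) (hAB' hx hy'B) (hAB' hx' hyB)
      (hAB' hx' hy'B)
      (hvv hv1 hv2 (Or.inr (by rw [hv1y, hv2y]; exact hyy')))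
      (hvv hv1 hv3 (Or.inl (by rw [hv1x, hv3x]; exact hxx')))
      (hvv hv1 hv4 (Or.inl (by rw [hv1x, hv4x]; exact hxx')))
      (hvv hv2 hv3 (Or.inl (by rw [hv2x, hv3x]; exact hxx')))
      (hvv hv2 hv4 (Or.inl (by rw [hv2x, hv4x]; exact hxx')))
      (hvv hv3 hv4 (Or.inr (by rw [hv3y, hv4y]; exact hyy')))
      (hne hv1 (Finset.mem_union_left _ hx)) (hne hv1 (Finset.mem_union_left _ hx'))
      (hne hv1 (Finset.mem_union_right _ hyB)) (hne hv1 (Finset.mem_union_right _ hy'B))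
      (hne hv2 (Finset.mem_union_left _ hx)) (hne hv2 (Finset.mem_union_left _ hx'))
      (hne hv2 (Finset.mem_union_right _ hyB)) (hne hv2 (Finset.mem_union_right _ hy'B))
      (hne hv3 (Finset.mem_union_left _ hx)) (hne hv3 (Finset.mem_union_left _ hx'))
      (hne hv3 (Finset.mem_union_right _ hyB)) (hne hv3 (Finset.mem_union_right _ hy'B))
      (hne hv4 (Finset.mem_union_left _ hx)) (hne hv4 (Finset.mem_union_left _ hx'))
      (hne hv4 (Finset.mem_union_right _ hyB)) (hne hv4 (Finset.mem_union_right _ hy'B))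
      (hv1x ▸ haxf v1 hv1) (hv1y ▸ hayf v1 hv1)
      (hv2x ▸ haxf v2 hv2) (hv2y ▸ hayf v2 hv2)
      (hv3x ▸ haxf v3 hv3) (hv3y ▸ hayf v3 hv3)
      (hv4x ▸ haxf v4 hv4) (hv4y ▸ hayf v4 hv4)
  -- pair counting
  have hpairs : ∑ x ∈ A', ((Y x).offDiag).card ≤ (B'.offDiag).card := by
    rw [← Finset.card_biUnion hdisj]
    exact Finset.card_le_card (Finset.biUnion_subset.mpr
      fun x _ => Finset.offDiag_mono (hYsub x))
  have hsumsq : ∑ x ∈ A', (Y x).card * (Y x).card ≤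
      B'.card * B'.card + ∑ x ∈ A', (Y x).card := by
    have h1 : ∀ x : V, (Y x).card * (Y x).card ≤ ((Y x).offDiag).card + (Y x).card := by
      intro x
      rw [Finset.offDiag_card]
      omega
    calc ∑ x ∈ A', (Y x).card * (Y x).card
        ≤ ∑ x ∈ A', (((Y x).offDiag).card + (Y x).card) :=
          Finset.sum_le_sum fun x _ => h1 x
      _ = (∑ x ∈ A', ((Y x).offDiag).card) + ∑ x ∈ A', (Y x).card := Finset.sum_add_distrib
      _ ≤ (B'.offDiag).card + ∑ x ∈ A', (Y x).card := by
          exact Nat.add_le_add_right hpairs _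
      _ ≤ B'.card * B'.card + ∑ x ∈ A', (Y x).card := by
          rw [Finset.offDiag_card]; omega
  -- Cauchy–Schwarz over ℝ
  set n : ℝ := (A'.card : ℝ) with hn
  set m : ℝ := (B'.card : ℝ) with hm
  set e : ℝ := ((∑ x ∈ A', (Y x).card : ℕ) : ℝ) with he
  have hCS : e ^ 2 ≤ n * (m * m + e) := by
    have h1 : e ^ 2 ≤ n * ∑ x ∈ A', ((Y x).card : ℝ) ^ 2 := by
      rw [he, Nat.cast_sum]
      exact sq_sum_le_card_mul_sum_sq
    have h2 : ∑ x ∈ A', ((Y x).card : ℝ) ^ 2 ≤ m * m + e := by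
      rw [hm, he]
      push_cast
      calc ∑ x ∈ A', ((Y x).card : ℝ) ^ 2
          = ((∑ x ∈ A', (Y x).card * (Y x).card : ℕ) : ℝ) := by
            push_cast
            exact Finset.sum_congr rfl fun x _ => by ring
        _ ≤ ((B'.card * B'.card + ∑ x ∈ A', (Y x).card : ℕ) : ℝ) := by
            exact_mod_cast hsumsq
        _ = _ := by push_cast; ring
    calc e ^ 2 ≤ n * ∑ x ∈ A', ((Y x).card : ℝ) ^ 2 := h1
      _ ≤ n * (m * m + e) := by
          apply mul_le_mul_of_nonneg_left h2
          rw [hn]; exact Nat.cast_nonneg _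
  have hen : 0 ≤ n := Nat.cast_nonneg _
  have hem : 0 ≤ m := Nat.cast_nonneg _
  have hee : 0 ≤ e := Nat.cast_nonneg _
  have heKST : e ≤ n + m * Real.sqrt n := aux_kst hen hem hee hCS
  -- assembling
  have hIcard : I.card ≤ NC.card + (A'.card + B'.card) + K.card := by
    have hsub : I ⊆ (NC ∪ (A' ∪ B')) ∪ K := by
      intro v hv
      rw [Finset.mem_union, Finset.mem_union]
      by_cases h1 : v ∈ NC
      · tauto
      by_cases h2 : v ∈ A' ∪ B'
      · tauto
      right
      rw [hK, Finset.mem_sdiff, Finset.mem_sdiff]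
      exact ⟨⟨hv, h1⟩, h2⟩
    calc I.card ≤ ((NC ∪ (A' ∪ B')) ∪ K).card := Finset.card_le_card hsub
      _ ≤ (NC ∪ (A' ∪ B')).card + K.card := Finset.card_union_le _ _
      _ ≤ (NC.card + (A' ∪ B').card) + K.card :=
          Nat.add_le_add_right (Finset.card_union_le _ _) _
      _ ≤ NC.card + (A'.card + B'.card) + K.card :=
          Nat.add_le_add_right (Nat.add_le_add_left (Finset.card_union_le _ _) _) _
  have hnD : A'.card ≤ G2.maxDegree :=
    le_trans (Finset.card_le_card Finset.sdiff_subset) (G2.degree_le_maxDegree a)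
  have hmD : B'.card ≤ G2.maxDegree :=
    le_trans (Finset.card_le_card Finset.sdiff_subset) (G2.degree_le_maxDegree b)
  have hnD' : n ≤ (G2.maxDegree : ℝ) := by rw [hn]; exact_mod_cast hnD
  have hmD' : m ≤ (G2.maxDegree : ℝ) := by rw [hm]; exact_mod_cast hmD
  have hsqn : Real.sqrt n ≤ Real.sqrt (G2.maxDegree : ℝ) := Real.sqrt_le_sqrt hnD'
  have hIreal : (I.card : ℝ) ≤ (G1.maxDegree : ℝ) + (n + m) + e := by
    have : (I.card : ℝ) ≤ (NC.card : ℝ) + (n + m) + e := by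
      rw [hn, hm, he, ← hcardK]
      exact_mod_cast hIcard
    have hNC' : (NC.card : ℝ) ≤ (G1.maxDegree : ℝ) := by exact_mod_cast hNCcard
    linarith
  have hmsq : m * Real.sqrt n ≤ (G2.maxDegree : ℝ) * Real.sqrt (G2.maxDegree : ℝ) := by
    apply mul_le_mul hmD' hsqn (Real.sqrt_nonneg _) (Nat.cast_nonneg _)
  linarith

set_option maxHeartbeats 1600000 in
/-- Claim 4: the mixed second-neighbourhood intersection bound. -/
theorem stmt_13 {V : Type*} [Fintype V] [DecidableEq V] (G1 G2 : SimpleGraph V)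
    [DecidableRel G1.Adj] [DecidableRel G2.Adj]
    (hΔ : G2.maxDegree ≤ G1.maxDegree)
    (hcyc1 : ∀ (v : V) (c : G1.Walk v v), c.IsCycle →
      c.length ≠ 4 ∧ c.length ≠ 6 ∧ c.length ≠ 8)
    (hcyc2 : ∀ (v : V) (c : G2.Walk v v), c.IsCycle →
      c.length ≠ 4 ∧ c.length ≠ 6 ∧ c.length ≠ 8)
    (t : ℕ) (ht : 2 ≤ t) (a b : V) (hab : a ≠ b) :
    ((((G2.neighborFinset a).biUnion fun x => G1.neighborFinset x) ∩
      ((G2.neighborFinset b).biUnion fun x => G1.neighborFinset x)).card : ℝ) ≤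
      (G1.maxDegree : ℝ) + G2.maxDegree +
        Real.sqrt (1.37 * ((t : ℝ) - 1)) * G2.maxDegree * Real.sqrt G2.maxDegree +
        Real.sqrt 1.37 / (0.37 * Real.sqrt ((t : ℝ) - 1)) *
          G1.maxDegree * Real.sqrt G2.maxDegree +
        (G1.maxDegree : ℝ) * G2.maxDegree / t := by
  have hkey := key G1 G2 hcyc1 hcyc2 a b hab
  have hT2 : (2:ℝ) ≤ (t:ℝ) := by exact_mod_cast ht
  set d1 : ℝ := (G1.maxDegree : ℝ) with hd1def
  set d2 : ℝ := (G2.maxDegree : ℝ) with hd2def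
  set r1 : ℝ := Real.sqrt d1 with hr1def
  set r2 : ℝ := Real.sqrt d2 with hr2def
  set q : ℝ := Real.sqrt ((t:ℝ) - 1) with hqdef
  set c : ℝ := Real.sqrt 1.37 with hcdef
  rcases Nat.eq_zero_or_pos G2.maxDegree with h0 | hpos
  · have hz : d2 = 0 := by rw [hd2def, h0]; norm_num
    have hrz : r2 = 0 := by rw [hr2def, hz, Real.sqrt_zero]
    rw [hz, hrz] at hkey ⊢
    simp only [mul_zero, zero_mul, add_zero, zero_div] at hkey ⊢
    linarith
  · have hd2 : 1 ≤ d2 := by rw [hd2def]; exact_mod_cast hpos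
    have hd12 : d2 ≤ d1 := by rw [hd1def, hd2def]; exact_mod_cast hΔ
    have hd1 : 1 ≤ d1 := le_trans hd2 hd12
    have hr2sq : r2 ^ 2 = d2 := Real.sq_sqrt (by linarith)
    have hr1sq : r1 ^ 2 = d1 := Real.sq_sqrt (by linarith)
    have hq2 : q ^ 2 = (t:ℝ) - 1 := Real.sq_sqrt (by linarith)
    have hqnn : 0 ≤ q := Real.sqrt_nonneg _
    have hq1 : 1 ≤ q := aux_one_le_of_sq hqnn (by linarith) hq2
    have hq0 : 0 < q := by linarith
    have hr2nn : 0 ≤ r2 := Real.sqrt_nonneg _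
    have hr21 : 1 ≤ r2 := aux_one_le_of_sq hr2nn hd2 hr2sq
    have hr12 : r2 ≤ r1 := by rw [hr1def, hr2def]; exact Real.sqrt_le_sqrt hd12
    have hr10 : 0 < r1 := by linarith
    have hc2 : c ^ 2 = 1.37 := Real.sq_sqrt (by norm_num)
    have hc0 : 0 ≤ c := Real.sqrt_nonneg _
    have hc117 : 1.17 ≤ c := aux_c117 hc0 hc2
    have hsplit : Real.sqrt (1.37 * ((t:ℝ) - 1)) = c * q := by
      rw [hcdef, hqdef]; exact Real.sqrt_mul (by norm_num) _
    rw [hsplit]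
    set W : ℝ := c / (0.37 * q) * d1 * r2 with hWdef
    have hWq : W * (0.37 * q) = c * d1 * r2 := by
      rw [hWdef]; field_simp
    have hW0 : 0 ≤ W := by
      rw [hWdef]
      have : (0:ℝ) < 0.37 * q := by linarith
      positivity
    have hlast : 0 ≤ d1 * d2 / (t:ℝ) := by positivity
    have hu0 : 0 ≤ c * q * d2 * r2 := by positivity
    -- AM–GM
    have hprod : (c * q * d2 * r2) * W * (0.37 * q) = c^2 * q * d1 * d2 * r2^2 := by
      calc (c * q * d2 * r2) * W * (0.37 * q) = (c * q * d2 * r2) * (W * (0.37 * q)) := by ring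
        _ = (c * q * d2 * r2) * (c * d1 * r2) := by rw [hWq]
        _ = c^2 * q * d1 * d2 * r2^2 := by ring
    have h4 : (c * q * d2 * r2) * W = (1.37 / 0.37) * (r1 * r2^2)^2 := by
      apply mul_right_cancel₀ (show (0.37:ℝ) * q ≠ 0 by positivity)
      calc (c * q * d2 * r2) * W * (0.37 * q) = c^2 * q * d1 * d2 * r2^2 := hprod
        _ = 1.37 / 0.37 * (r1 * r2 ^ 2) ^ 2 * (0.37 * q) := by
            rw [hc2, ← hr1sq, ← hr2sq]; ring
    have hAMGM : 3.84 * (r1 * r2^2) ≤ c * q * d2 * r2 + W :=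
      aux_amgm hu0 hW0 (by positivity) h4
    -- finish
    have hfin : 2 * d2 + d2 * r2 ≤ 3.84 * (r1 * r2 ^ 2) := by
      rw [← hr2sq]; exact aux_fin hr21 hr12
    linarith [hkey, hAMGM, hlast, hfin]
end
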